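/- arXiv:2208.07489 — 2 statements merged into one kernel-verified Lean document; each statement's English description precedes it below -/
import Mathlib

section
/- Let n and m be natural numbers with 1 ≤ m, and let Φ = {y_1 < y_2 < ⋯ < y_m} be a subset of {0, 1, …, n−1} of cardinality m; set y_{m+1} = n. Then the Elias run-length cost of Φ, namely cost(Φ, n) = ∑_{i=1}^{m} (2·⌊log₂(y_{i+1} − y_i)⌋ + 1) where ⌊log₂·⌋ is the natural-number base-2 logarithm, satisfies cost(Φ, n) ≤ 2·m·log₂(n/m) + m, where the right-hand side uses the real base-2 logarithm. -/
/-!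
The consecutive gaps of `y₁ < ⋯ < yₘ < n` are `m` positive integers with sum `n - y₁ ≤ n`.
Since `⌊log₂ g⌋ ≤ log₂ g`, it suffices to bound `∑ log₂ gᵢ`, and by concavity of `log₂`
this is at most `m · log₂ (n / m)`: each `log₂ gᵢ` lies below the tangent line of `log₂` at
the mean `n / m`, and the linear parts of these tangent bounds sum to at most `0`.
-/

/-- The Elias run-length cost of a finite set `Φ ⊆ {0, …, n-1}` with sentinel `n`:
sort `Φ` as `y₁ < y₂ < ⋯ < yₘ`, append the sentinel `n`, and charge
`2 * ⌊log₂ g⌋ + 1` bits for each consecutive gap `g = y_{i+1} - y_i`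
(the length of the Elias gamma code of `g`). -/
def eliasCost (Φ : Finset ℕ) (n : ℕ) : ℕ :=
  let l := Φ.sort (· ≤ ·) ++ [n]
  (List.zipWith (fun a b => 2 * Nat.log 2 (b - a) + 1) l l.tail).sum

open Real

namespace List

def gaps (l : List ℕ) : List ℕ := zipWith (fun a b => b - a) l l.tail

@[simp] lemma gaps_singleton (a : ℕ) : gaps [a] = [] := rfl

@[simp] lemma gaps_cons_cons (a b : ℕ) (l : List ℕ) :
    gaps (a :: b :: l) = (b - a) :: gaps (b :: l) :=
  rfl

@[simp] lemma length_gaps (l : List ℕ) : l.gaps.length = l.length - 1 := by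
  simp [gaps]

lemma pos_of_mem_gaps : ∀ {l : List ℕ}, l.Pairwise (· < ·) → ∀ {g}, g ∈ l.gaps → 0 < g
  | a :: b :: l, hl, g, hg => by
    rw [gaps_cons_cons, mem_cons] at hg
    rcases hg with rfl | hg
    · exact Nat.sub_pos_of_lt (rel_of_pairwise_cons hl mem_cons_self)
    · exact pos_of_mem_gaps hl.of_cons hg

lemma sum_gaps_add_head : ∀ {l : List ℕ}, l.Pairwise (· ≤ ·) → (h : l ≠ []) →
    l.gaps.sum + l.head h = l.getLast h
  | [a], _, _ => by simp
  | a :: b :: l, hl, _ => by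
    have hab : a ≤ b := rel_of_pairwise_cons hl mem_cons_self
    have ih := sum_gaps_add_head hl.of_cons (cons_ne_nil b l)
    simp only [gaps_cons_cons, sum_cons, head_cons, getLast_cons_cons] at ih ⊢
    omega

lemma sum_map_logb_le {b s : ℝ} (hb : 1 < b) {L : List ℝ} (hpos : ∀ x ∈ L, 0 < x)
    (hsum : L.sum ≤ s) : (L.map (logb b)).sum ≤ L.length * logb b (s / L.length) := by
  rcases eq_or_ne L [] with rfl | hne
  · simp
  set k : ℝ := (L.length : ℝ)
  have hk : 0 < k := by simpa [k] using length_pos_iff.2 hne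
  set a := s / k
  have ha : 0 < a := div_pos ((sum_pos L hpos hne).trans_le hsum) hk
  have hlogb : 0 < log b := log_pos hb
  -- the tangent line of the concave function `logb b` at `a`
  have tangent : ∀ x ∈ L, logb b x ≤ (logb b a - (log b)⁻¹) + (a * log b)⁻¹ * x := by
    intro x hx
    have hx := hpos x hx
    have key : log x ≤ log a - 1 + x / a := by
      have := log_le_sub_one_of_pos (div_pos hx ha)
      rw [log_div hx.ne' ha.ne'] at this
      linarith
    calc logb b x = log x / log b := rfl
      _ ≤ (log a - 1 + x / a) / log b := div_le_div_of_nonneg_right key hlogb.le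
      _ = (logb b a - (log b)⁻¹) + (a * log b)⁻¹ * x := by
        rw [logb]
        field_simp
  calc (L.map (logb b)).sum
      ≤ (L.map fun x => (logb b a - (log b)⁻¹) + (a * log b)⁻¹ * x).sum := sum_le_sum tangent
    _ = k * (logb b a - (log b)⁻¹) + (a * log b)⁻¹ * L.sum := by
        rw [sum_map_add, sum_map_mul_left]
        simp [k]
    _ ≤ k * (logb b a - (log b)⁻¹) + (a * log b)⁻¹ * s := by gcongr
    _ = k * logb b a := by
        have hka : k * a = s := mul_div_cancel₀ s hk.ne'
        field_simp
        linarith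

end List

def eliasGammaLength (g : ℕ) : ℕ := 2 * Nat.log 2 g + 1

lemma eliasCost_eq_sum_gaps (Φ : Finset ℕ) (n : ℕ) :
    eliasCost Φ n = ((Φ.sort (· ≤ ·) ++ [n]).gaps.map eliasGammaLength).sum := by
  simp [eliasCost, List.gaps, eliasGammaLength, List.map_zipWith]

lemma sum_map_eliasGammaLength_le {n : ℕ} {G : List ℕ} (hpos : ∀ g ∈ G, 0 < g)
    (hsum : G.sum ≤ n) :
    ((G.map eliasGammaLength).sum : ℝ) ≤ 2 * G.length * logb 2 (n / G.length) + G.length := by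
  have hlogb := List.sum_map_logb_le one_lt_two (L := G.map (Nat.cast : ℕ → ℝ)) (s := n)
    (by simpa using hpos) (by rw [← Nat.cast_list_sum]; exact_mod_cast hsum)
  calc ((G.map eliasGammaLength).sum : ℝ)
      = 2 * (G.map fun g => (Nat.log 2 g : ℝ)).sum + G.length := by
        simp [Function.comp_def, eliasGammaLength, List.sum_map_add, List.sum_map_mul_left]
    _ ≤ 2 * (G.map fun g : ℕ => logb 2 (g : ℝ)).sum + G.length := by
        gcongr
        exact List.sum_le_sum fun g _ => by exact_mod_cast natLog_le_logb g 2
    _ ≤ 2 * G.length * logb 2 (n / G.length) + G.length := by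
        simp only [List.map_map, List.length_map, Function.comp_def] at hlogb
        linarith

theorem eliasCost_le_general (n m : ℕ) (Φ : Finset ℕ) (hcard : Φ.card = m)
    (hsub : ∀ y ∈ Φ, y < n) :
    (eliasCost Φ n : ℝ) ≤ 2 * (m : ℝ) * Real.logb 2 ((n : ℝ) / (m : ℝ)) + (m : ℝ) := by
  set l := Φ.sort (· ≤ ·) ++ [n]
  have hl : l.Pairwise (· < ·) := List.pairwise_append.2
    ⟨Φ.sortedLT_sort.pairwise, List.pairwise_singleton _ _,
      fun a ha b hb => List.eq_of_mem_singleton hb ▸ hsub a ((Φ.mem_sort _).1 ha)⟩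
  have hlen : l.gaps.length = m := by simp [l, hcard]
  have hsum : l.gaps.sum ≤ n := by
    have := List.sum_gaps_add_head (hl.imp le_of_lt) (by simp [l])
    rw [List.getLast_append_singleton] at this
    omega
  rw [eliasCost_eq_sum_gaps, ← hlen]
  exact sum_map_eliasGammaLength_le (fun g => List.pos_of_mem_gaps hl) hsum

/-- For `1 ≤ m` and `Φ ⊆ {0, …, n-1}` of cardinality `m`, the Elias
run-length cost of `Φ` is at most `2 * m * log₂ (n / m) + m`. -/
theorem eliasCost_le (n m : ℕ) (hm : 1 ≤ m) (Φ : Finset ℕ) (hcard : Φ.card = m)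
    (hsub : ∀ y ∈ Φ, y < n) :
    (eliasCost Φ n : ℝ) ≤ 2 * (m : ℝ) * Real.logb 2 ((n : ℝ) / (m : ℝ)) + (m : ℝ) :=
  eliasCost_le_general n m Φ hcard hsub
end

section
/- Let L ≥ 1 be a natural number, set n = 2^L, and for each l ∈ {1, …, L} let Φ_l ⊆ {0, 1, …, n−1} be a subset of cardinality exactly 2^l. Then the total Elias run-length cost satisfies ∑_{l=1}^{L} cost(Φ_l, n) ≤ 6·n. (This is the worst-case instance of the paper's Lemma 1: the compressed historicalMembership structure occupies O(n) bits.) -/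
/-!
Level `l` has `m = 2^l` positive gaps summing to at most `n = 2^L`, i.e. to at most `m · 2^k`
with `k = L - l`. By concavity of the logarithm their `⌊log₂⌋`s then sum to at most `m · k`;
the discrete form of this tangent-line bound is `2^k (⌊log₂ g⌋ + 1) ≤ g + k · 2^k`. So level `l`
costs at most `2^l (2 (L - l) + 1)` bits, and these bounds sum to exactly `6 · 2^L - 4L - 6`.
-/

open Finset

theorem two_pow_mul_log_add_one_le {g : ℕ} (hg : g ≠ 0) (k : ℕ) :
    2 ^ k * (Nat.log 2 g + 1) ≤ g + k * 2 ^ k := by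
  have hpow : 2 ^ Nat.log 2 g ≤ g := Nat.pow_log_le_self 2 hg
  rcases le_or_gt k (Nat.log 2 g) with hk | hk
  · obtain ⟨d, hd⟩ := Nat.exists_eq_add_of_le hk
    have hd1 : d + 1 ≤ 2 ^ d := Nat.lt_two_pow_self
    calc 2 ^ k * (Nat.log 2 g + 1) = 2 ^ k * (d + 1) + k * 2 ^ k := by rw [hd]; ring
      _ ≤ 2 ^ k * 2 ^ d + k * 2 ^ k := by gcongr
      _ = 2 ^ Nat.log 2 g + k * 2 ^ k := by rw [hd, pow_add]
      _ ≤ g + k * 2 ^ k := by gcongr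
  · calc 2 ^ k * (Nat.log 2 g + 1) ≤ 2 ^ k * k := by gcongr; omega
      _ ≤ g + k * 2 ^ k := by rw [mul_comm]; exact Nat.le_add_left _ _

theorem List.sum_map_log_le {G : List ℕ} (hG : ∀ g ∈ G, g ≠ 0) {k : ℕ}
    (hsum : G.sum ≤ G.length * 2 ^ k) : (G.map (Nat.log 2)).sum ≤ G.length * k := by
  have htangent : (G.map fun g => 2 ^ k * (Nat.log 2 g + 1)).sum ≤
      (G.map fun g => g + k * 2 ^ k).sum :=
    List.sum_le_sum fun g hg => two_pow_mul_log_add_one_le (hG g hg) k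
  simp only [List.sum_map_mul_left, List.sum_map_add, List.map_id', List.map_const',
    List.sum_replicate, smul_eq_mul] at htangent
  have hcancel : 2 ^ k * ((G.map (Nat.log 2)).sum + G.length) ≤
      2 ^ k * (G.length + G.length * k) := by linarith
  have := Nat.le_of_mul_le_mul_left hcancel (by positivity)
  omega

def consecutiveGaps (l : List ℕ) : List ℕ :=
  List.zipWith (fun a b => b - a) l l.tail

@[simp]
theorem consecutiveGaps_cons_cons (a b : ℕ) (l : List ℕ) :
    consecutiveGaps (a :: b :: l) = (b - a) :: consecutiveGaps (b :: l) := rfl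

@[simp]
theorem length_consecutiveGaps (l : List ℕ) : (consecutiveGaps l).length = l.length - 1 := by
  simp [consecutiveGaps]

theorem ne_zero_of_mem_consecutiveGaps : ∀ {l : List ℕ}, l.IsChain (· < ·) →
    ∀ g ∈ consecutiveGaps l, g ≠ 0
  | [], _ => by simp [consecutiveGaps]
  | [_], _ => by simp [consecutiveGaps]
  | a :: b :: l, h => by
    rw [List.isChain_cons_cons] at h
    simp only [consecutiveGaps_cons_cons, List.mem_cons, forall_eq_or_imp]
    exact ⟨by omega, ne_zero_of_mem_consecutiveGaps h.2⟩

theorem sum_consecutiveGaps_add_headD : ∀ {l : List ℕ}, l.IsChain (· ≤ ·) →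
    (consecutiveGaps l).sum + l.headD 0 = l.getLastD 0
  | [], _ => by simp [consecutiveGaps]
  | [_], _ => by simp [consecutiveGaps]
  | a :: b :: l, h => by
    rw [List.isChain_cons_cons] at h
    have ih := sum_consecutiveGaps_add_headD h.2
    simp only [consecutiveGaps_cons_cons, List.sum_cons, List.headD_cons, List.getLastD_cons] at ih ⊢
    omega

theorem eliasCost_eq_sum_log_consecutiveGaps (Φ : Finset ℕ) (n : ℕ) :
    eliasCost Φ n =
      2 * ((consecutiveGaps (Φ.sort (· ≤ ·) ++ [n])).map (Nat.log 2)).sum + #Φ := by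
  have hmap : eliasCost Φ n =
      ((consecutiveGaps (Φ.sort (· ≤ ·) ++ [n])).map fun g => 2 * Nat.log 2 g + 1).sum := by
    simp only [eliasCost, consecutiveGaps, List.map_zipWith]
  rw [hmap, List.sum_map_add, List.sum_map_mul_left, List.map_const', List.sum_replicate]
  simp

theorem eliasCost_le_card_mul {Φ : Finset ℕ} {n k : ℕ} (hΦ : ∀ y ∈ Φ, y < n)
    (hn : n ≤ #Φ * 2 ^ k) : eliasCost Φ n ≤ #Φ * (2 * k + 1) := by
  rw [eliasCost_eq_sum_log_consecutiveGaps]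
  set l := Φ.sort (· ≤ ·) ++ [n]
  have hsorted : l.IsChain (· < ·) := by
    refine List.Pairwise.isChain (List.pairwise_append.2 ⟨(Φ.sortedLT_sort).pairwise, by simp, ?_⟩)
    simpa using hΦ
  have hlength : (consecutiveGaps l).length = #Φ := by simp [l]
  have hsum : (consecutiveGaps l).sum ≤ n := by
    have := sum_consecutiveGaps_add_headD (hsorted.imp fun _ _ => le_of_lt)
    have hlast : l.getLastD 0 = n := by simp [l]
    omega
  have hlog := List.sum_map_log_le (ne_zero_of_mem_consecutiveGaps hsorted)
    (k := k) (by rw [hlength]; omega)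
  rw [hlength] at hlog
  linarith

theorem sum_Icc_two_pow_add_two (L : ℕ) : ∑ l ∈ Icc 1 L, 2 ^ l + 2 = 2 ^ (L + 1) := by
  induction L with
  | zero => simp
  | succ L ih => rw [sum_Icc_succ_top (by omega), pow_succ 2 (L + 1)]; omega

theorem sum_Icc_two_pow_mul_add (L : ℕ) :
    ∑ l ∈ Icc 1 L, 2 ^ l * (2 * (L - l) + 1) + (4 * L + 6) = 6 * 2 ^ L := by
  induction L with
  | zero => simp
  | succ L ih =>
    have hshift : ∑ l ∈ Icc 1 L, 2 ^ l * (2 * (L + 1 - l) + 1) =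
        ∑ l ∈ Icc 1 L, 2 ^ l * (2 * (L - l) + 1) + 2 * ∑ l ∈ Icc 1 L, 2 ^ l := by
      rw [mul_sum, ← sum_add_distrib]
      refine sum_congr rfl fun l hl => ?_
      rw [show L + 1 - l = L - l + 1 by have := (mem_Icc.1 hl).2; omega]
      ring
    have hgeom := sum_Icc_two_pow_add_two L
    rw [sum_Icc_succ_top (by omega), hshift, Nat.sub_self, pow_succ 2 L]
    omega

theorem total_eliasCost_le_general (L : ℕ) (n : ℕ) (hn : n = 2 ^ L)
    (Φ : ℕ → Finset ℕ)
    (hsub : ∀ l ∈ Finset.Icc 1 L, ∀ y ∈ Φ l, y < n)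
    (hcard : ∀ l ∈ Finset.Icc 1 L, (Φ l).card = 2 ^ l) :
    ∑ l ∈ Finset.Icc 1 L, eliasCost (Φ l) n ≤ 6 * n := by
  subst hn
  calc ∑ l ∈ Icc 1 L, eliasCost (Φ l) (2 ^ L)
      ≤ ∑ l ∈ Icc 1 L, 2 ^ l * (2 * (L - l) + 1) := by
        refine sum_le_sum fun l hl => ?_
        have hpow : 2 ^ L ≤ #(Φ l) * 2 ^ (L - l) := by
          rw [hcard l hl, ← pow_add, Nat.add_sub_cancel' (mem_Icc.1 hl).2]
        simpa only [hcard l hl] using eliasCost_le_card_mul (hsub l hl) hpow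
    _ ≤ 6 * 2 ^ L := by have := sum_Icc_two_pow_mul_add L; omega

/-- Let `L ≥ 1`, `n = 2^L`, and for each `l ∈ {1, …, L}` let
`Φ l ⊆ {0, …, n-1}` have cardinality exactly `2^l`. Then the total Elias run-length
cost of all the levels is at most `6 * n`. -/
theorem total_eliasCost_le (L : ℕ) (hL : 1 ≤ L) (n : ℕ) (hn : n = 2 ^ L)
    (Φ : ℕ → Finset ℕ)
    (hsub : ∀ l ∈ Finset.Icc 1 L, ∀ y ∈ Φ l, y < n)
    (hcard : ∀ l ∈ Finset.Icc 1 L, (Φ l).card = 2 ^ l) :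
    ∑ l ∈ Finset.Icc 1 L, eliasCost (Φ l) n ≤ 6 * n :=
  total_eliasCost_le_general L n hn Φ hsub hcard
end
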